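/- (SEP dominates CBSEP Dirichlet form) With μ the Bernoulli(p) product measure on {0,1}^V conditioned on at least one particle, p ∈ (0,1), the SEP Dirichlet form D^SEP(f) = ½Σ_{e∈E} E_μ[(f(ω^e)−f(ω))²] (where ω^e swaps the states at the endpoints of e) satisfies D^SEP(f) ≤ ((2-p)/(1-p))·D(f) for every f : Ω₊ → ℝ, where D is the CBSEP Dirichlet form. -/

import Mathlib

open Finset

variable {V : Type*} [Fintype V] [DecidableEq V]

/-- Number of particles of a configuration. -/
def Np (ω : V → Bool) : ℕ := (Finset.univ.filter (fun x => ω x = true)).card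

/-- Configurations with at least one particle. -/
def OmegaPlus (V : Type*) [Fintype V] [DecidableEq V] : Finset (V → Bool) :=
  Finset.univ.filter (fun ω => 0 < Np ω)

/-- Bernoulli(p) product weight. -/
def bern (p : ℝ) (ω : V → Bool) : ℝ := ∏ x, if ω x = true then p else 1 - p

/-- The measure `π` conditioned on at least one particle (weight on `OmegaPlus`). -/
noncomputable def mu (p : ℝ) (ω : V → Bool) : ℝ := bern p ω / (1 - (1 - p) ^ Fintype.card V)

/-- Fill vertex `x` with a particle. -/
def fill (ω : V → Bool) (x : V) : V → Bool := Function.update ω x true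

/-- Flip the state at vertex `x`. -/
def flipAt (ω : V → Bool) (x : V) : V → Bool := Function.update ω x (!ω x)

/-- Variance of `f` under resampling the states at `x, y` from `π_x ⊗ π_y`
conditioned on the edge being non-empty. -/
noncomputable def edgeVar (p : ℝ) (f : (V → Bool) → ℝ) (x y : V) (ω : V → Bool) : ℝ :=
  let u : Bool → Bool → ℝ := fun a b => f (Function.update (Function.update ω x a) y b)
  let m : ℝ := ((1 - p) / (2 - p)) * u true false + ((1 - p) / (2 - p)) * u false true +
      (p / (2 - p)) * u true true
  ((1 - p) / (2 - p)) * (u true false - m) ^ 2 + ((1 - p) / (2 - p)) * (u false true - m) ^ 2 +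
    (p / (2 - p)) * (u true true - m) ^ 2

/-- The CBSEP Dirichlet form `D(f) = Σ_{e∈E} μ(𝟙_{E_e} Var_e(f | E_e))`,
written as half the sum over oriented edges. -/
noncomputable def dirichlet (G : SimpleGraph V) [DecidableRel G.Adj] (p : ℝ)
    (f : (V → Bool) → ℝ) : ℝ :=
  (1 / 2) * ∑ x, ∑ y ∈ G.neighborFinset x,
    ∑ ω ∈ (OmegaPlus V).filter (fun ω => ω x = true ∨ ω y = true), mu p ω * edgeVar p f x y ω

/-- Exchange the states at `x` and `y`. -/
def swapAt (ω : V → Bool) (x y : V) : V → Bool :=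
  Function.update (Function.update ω x (ω y)) y (ω x)

/-!
If the edge `{x, y}` carries exactly one particle, `ω` and `ω^e` are the two single-particle
outcomes of the resampling under `π_e(· | E_e)`, each of probability `q = (1-p)/(2-p)`. For the
conditional mean `m`, `(f(ω^e) - f(ω))² ≤ 2((f(ω) - m)² + (f(ω^e) - m)²) ≤ (2/q) Var_e(f | E_e)`.
If the edge is empty or full the exchange does nothing, so summing over `ω` and the edges gives
the bound, the factor `2` being absorbed by the `1/4` versus `1/2` normalisations.
-/

lemma sq_sub_le_two_div_mul_weighted_sq {q r : ℝ} (hq : 0 < q) (hr : 0 ≤ r) (a b c m : ℝ) :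
    (a - b) ^ 2 ≤ 2 / q * (q * (a - m) ^ 2 + q * (b - m) ^ 2 + r * (c - m) ^ 2) :=
  calc (a - b) ^ 2 = ((a - m) + (m - b)) ^ 2 := by ring
    _ ≤ 2 * ((a - m) ^ 2 + (m - b) ^ 2) := add_sq_le
    _ = 2 / q * (q * (a - m) ^ 2 + q * (b - m) ^ 2) := by field_simp; ring
    _ ≤ 2 / q * (q * (a - m) ^ 2 + q * (b - m) ^ 2 + r * (c - m) ^ 2) :=
      mul_le_mul_of_nonneg_left (le_add_of_nonneg_right (by positivity)) (by positivity)

omit [DecidableEq V] in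
lemma bern_nonneg {p : ℝ} (hp0 : 0 ≤ p) (hp1 : p ≤ 1) (ω : V → Bool) : 0 ≤ bern p ω :=
  prod_nonneg fun x _ => by split_ifs <;> linarith

omit [DecidableEq V] in
lemma mu_nonneg {p : ℝ} (hp0 : 0 ≤ p) (hp1 : p ≤ 1) (ω : V → Bool) : 0 ≤ mu p ω :=
  div_nonneg (bern_nonneg hp0 hp1 ω) (sub_nonneg.2 (pow_le_one₀ (by linarith) (by linarith)))

omit [Fintype V] in
lemma edgeVar_nonneg {p : ℝ} (hp0 : 0 ≤ p) (hp1 : p ≤ 1) (f : (V → Bool) → ℝ) (x y : V)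
    (ω : V → Bool) : 0 ≤ edgeVar p f x y ω := by
  have hq : 0 ≤ (1 - p) / (2 - p) := div_nonneg (by linarith) (by linarith)
  have hr : 0 ≤ p / (2 - p) := div_nonneg hp0 (by linarith)
  simp only [edgeVar]
  exact add_nonneg (add_nonneg (mul_nonneg hq (sq_nonneg _)) (mul_nonneg hq (sq_nonneg _)))
    (mul_nonneg hr (sq_nonneg _))

omit [Fintype V] in
lemma swapAt_of_eq {ω : V → Bool} {x y : V} (h : ω x = ω y) : swapAt ω x y = ω := by
  rw [swapAt, ← h, Function.update_eq_self, h, Function.update_eq_self]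

omit [Fintype V] in
lemma sq_swapAt_sub_le_edgeVar {p : ℝ} (hp0 : 0 < p) (hp1 : p < 1) (f : (V → Bool) → ℝ)
    (x y : V) (ω : V → Bool) :
    (f (swapAt ω x y) - f ω) ^ 2 ≤ 2 * ((2 - p) / (1 - p)) * edgeVar p f x y ω := by
  by_cases h : ω x = ω y
  · rw [swapAt_of_eq h, sub_self, zero_pow two_ne_zero]
    have := edgeVar_nonneg hp0.le hp1.le f x y ω
    have : 0 ≤ (2 - p) / (1 - p) := div_nonneg (by linarith) (by linarith)
    positivity
  have hq : 0 < (1 - p) / (2 - p) := div_pos (by linarith) (by linarith)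
  have hr : 0 ≤ p / (2 - p) := div_nonneg hp0.le (by linarith)
  rw [show 2 * ((2 - p) / (1 - p)) = 2 / ((1 - p) / (2 - p)) by
    rw [div_div_eq_mul_div, mul_div_assoc]]
  set u : Bool → Bool → ℝ := fun a b => f (Function.update (Function.update ω x a) y b)
  have hswap : f (swapAt ω x y) = u (ω y) (ω x) := rfl
  have hself : f ω = u (ω x) (ω y) := by simp only [u, Function.update_eq_self]
  rw [hswap, hself, edgeVar]
  cases hx : ω x <;> cases hy : ω y <;> simp only [hx, hy, not_true_eq_false] at h
  · exact sq_sub_le_two_div_mul_weighted_sq hq hr _ _ (u true true) _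
  · rw [← neg_sub, neg_sq]
    exact sq_sub_le_two_div_mul_weighted_sq hq hr _ _ (u true true) _

lemma sum_mu_sq_swapAt_sub_le {p : ℝ} (hp0 : 0 < p) (hp1 : p < 1) (f : (V → Bool) → ℝ)
    (x y : V) :
    ∑ ω ∈ OmegaPlus V, mu p ω * (f (swapAt ω x y) - f ω) ^ 2 ≤
      2 * ((2 - p) / (1 - p)) *
        ∑ ω ∈ (OmegaPlus V).filter (fun ω => ω x = true ∨ ω y = true),
          mu p ω * edgeVar p f x y ω := by
  have hempty : ∀ ω ∈ OmegaPlus V, mu p ω * (f (swapAt ω x y) - f ω) ^ 2 ≠ 0 →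
      ω x = true ∨ ω y = true := by
    intro ω _ hne
    by_contra! hxy
    simp only [Bool.not_eq_true] at hxy
    rw [swapAt_of_eq (hxy.1.trans hxy.2.symm), sub_self] at hne
    simp at hne
  rw [← sum_filter_of_ne hempty, mul_sum]
  refine sum_le_sum fun ω _ => ?_
  rw [mul_left_comm]
  exact mul_le_mul_of_nonneg_left (sq_swapAt_sub_le_edgeVar hp0 hp1 f x y ω)
    (mu_nonneg hp0.le hp1.le ω)

/-- The SEP Dirichlet form `D^SEP(f) = ½Σ_{e∈E} E_μ[(f(ω^e)-f(ω))²]`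
(written over oriented edges) satisfies `D^SEP(f) ≤ ((2-p)/(1-p))·D(f)`. -/
theorem stmt12 (G : SimpleGraph V) [DecidableRel G.Adj] (p : ℝ) (hp0 : 0 < p) (hp1 : p < 1)
    (f : (V → Bool) → ℝ) :
    (1 / 4) * (∑ x, ∑ y ∈ G.neighborFinset x, ∑ ω ∈ OmegaPlus V,
        mu p ω * (f (swapAt ω x y) - f ω) ^ 2) ≤
      ((2 - p) / (1 - p)) * dirichlet G p f :=
  calc (1 / 4) * (∑ x, ∑ y ∈ G.neighborFinset x, ∑ ω ∈ OmegaPlus V,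
        mu p ω * (f (swapAt ω x y) - f ω) ^ 2)
      ≤ (1 / 4) * ∑ x, ∑ y ∈ G.neighborFinset x, 2 * ((2 - p) / (1 - p)) *
          ∑ ω ∈ (OmegaPlus V).filter (fun ω => ω x = true ∨ ω y = true),
            mu p ω * edgeVar p f x y ω := by
        gcongr with x _ y _
        exact sum_mu_sq_swapAt_sub_le hp0 hp1 f x y
    _ = ((2 - p) / (1 - p)) * dirichlet G p f := by
        simp only [dirichlet, ← mul_sum]
        ring
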